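/- Let g, h be vectors in (F_{q^m})^n with rank weights at least n-k+2 such that the Gabidulin codes G_{n,n-k+2}(g) and G_{n,n-k+2}(h) intersect trivially, and let γ be in F_{q^m}. Then the 2(n-k) vectors g+γh; g^{[1]}, h^{[1]}, ..., g^{[n-k-1]}, h^{[n-k-1]}; and g^{[n-k]}+γ^{[1]}h^{[n-k]} are linearly independent over F_{q^m}. -/

import Mathlib

/-! The vectors `g^{[s]}, h^{[s]}` for `s ≤ n - k` are linearly independent. For each family alone
this is Moore's criterion: a relation `∑ c_s x^{[s]} = 0` says that the `q`-linearized polynomial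
`∑ c_s X^{q^s}`, of degree `< q^(n-k+1)`, vanishes on the `Fq`-span of the coordinates of `x`, a
space with `q^(rank x) ≥ q^(n-k+1)` elements. The two families together are independent because
the Gabidulin codes meet trivially. Each vector of the given family is one of these, plus a multiple
of `h` or `h^{[n-k]}`, which occur nowhere else in it; so modulo the span of `h, h^{[n-k]}` the
family becomes a subfamily of an independent one. -/

/-- The rank weight of a vector over the extension `K / Fq`. -/
noncomputable def rankWeight (Fq : Type*) {K : Type*} [Field Fq] [Field K]
    [Algebra Fq K] {n : ℕ} (x : Fin n → K) : ℕ :=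
  Module.finrank Fq (Submodule.span Fq (Set.range x))

/-- The Gabidulin code `G_{n,r}(g)`: the `K`-span of `g, g^{[1]}, …, g^{[r-1]}`. -/
def gab (K : Type*) [Field K] (q k : ℕ) {n : ℕ} (a : Fin n → K) :
    Submodule K (Fin n → K) :=
  Submodule.span K (Set.range fun s : Fin k => fun j => a j ^ q ^ (s : ℕ))

open Polynomial Submodule

section LinearizedPoly

variable {K : Type*} [Semiring K] {q r : ℕ}

variable (q) in
noncomputable def linearizedPoly (c : Fin r → K) : K[X] :=
  ∑ s, C (c s) * X ^ q ^ (s : ℕ)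

lemma coeff_linearizedPoly (hq : 1 < q) (c : Fin r → K) (s : Fin r) :
    (linearizedPoly q c).coeff (q ^ (s : ℕ)) = c s := by
  simp [linearizedPoly, finsetSum_coeff, coeff_X_pow, (Nat.pow_right_injective hq).eq_iff,
    Fin.val_inj]

lemma natDegree_linearizedPoly_lt (hq : 1 < q) (c : Fin r → K) :
    (linearizedPoly q c).natDegree < q ^ r := by
  cases r with
  | zero => simp [linearizedPoly]
  | succ t =>
    refine (natDegree_sum_le_of_forall_le _ _ fun s _ => ?_).trans_lt
      (Nat.pow_lt_pow_right hq t.lt_succ_self)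
    exact (natDegree_C_mul_X_pow_le _ _).trans
      (Nat.pow_le_pow_right hq.le (Nat.lt_succ_iff.1 s.2))

end LinearizedPoly

section LinearizedMap

variable {Fq K : Type*} [Field Fq] [Fintype Fq] [Field K] [Algebra Fq K] {r : ℕ}

variable (Fq) in
def linearizedMap (c : Fin r → K) : K →ₗ[Fq] K :=
  ∑ s, LinearMap.mulLeft Fq (c s) ∘ₗ (FiniteField.frobeniusAlgHom Fq K ^ (s : ℕ)).toLinearMap

lemma eval_linearizedPoly (c : Fin r → K) (a : K) :
    (linearizedPoly (Fintype.card Fq) c).eval a = linearizedMap Fq c a := by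
  simp [linearizedPoly, linearizedMap, eval_finsetSum, AlgHom.coe_pow,
    FiniteField.coe_frobeniusAlgHom, pow_iterate]

/-- The subspace has `q ^ finrank V ≥ q ^ r` elements, more than the degree allows as roots. -/
lemma linearizedPoly_eq_zero_of_le_ker (c : Fin r → K) (V : Submodule Fq K)
    [FiniteDimensional Fq V] (hV : V ≤ LinearMap.ker (linearizedMap Fq c))
    (hr : r ≤ Module.finrank Fq V) : linearizedPoly (Fintype.card Fq) c = 0 := by
  have : Fintype V := @Fintype.ofFinite V (Module.finite_of_finite Fq)
  refine eq_zero_of_natDegree_lt_card_of_eval_eq_zero (ι := V) _ Subtype.val_injective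
    (fun v => (eval_linearizedPoly c v).trans (LinearMap.mem_ker.1 (hV v.2))) ?_
  calc _ < Fintype.card Fq ^ r := natDegree_linearizedPoly_lt Fintype.one_lt_card c
    _ ≤ Fintype.card Fq ^ Module.finrank Fq V := Nat.pow_le_pow_right Fintype.card_pos hr
    _ = Fintype.card V := Module.card_eq_pow_finrank.symm

end LinearizedMap

def frobPowers {K : Type*} [Monoid K] {n : ℕ} (q : ℕ) (x : Fin n → K) (r : ℕ) :
    Fin r → Fin n → K :=
  fun s j => x j ^ q ^ (s : ℕ)

theorem linearIndependent_frobPowers_of_le_rankWeight {Fq K : Type*} [Field Fq] [Fintype Fq]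
    [Field K] [Algebra Fq K] {n r : ℕ} (x : Fin n → K) (hx : r ≤ rankWeight Fq x) :
    LinearIndependent K (frobPowers (Fintype.card Fq) x r) := by
  rw [Fintype.linearIndependent_iff]
  intro c hc s
  have hker : span Fq (Set.range x) ≤ LinearMap.ker (linearizedMap Fq c) := by
    rw [span_le]
    rintro _ ⟨j, rfl⟩
    simpa [← eval_linearizedPoly, linearizedPoly, eval_finsetSum, frobPowers] using congrFun hc j
  have := FiniteDimensional.span_of_finite Fq (Set.finite_range x)
  have hP := linearizedPoly_eq_zero_of_le_ker c _ hker hx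
  rw [← coeff_linearizedPoly (Fintype.one_lt_card (α := Fq)) c s, hP, coeff_zero]

lemma gab_mono (K : Type*) [Field K] (q : ℕ) {n r r' : ℕ} (a : Fin n → K) (hr : r ≤ r') :
    gab K q r a ≤ gab K q r' a := by
  refine span_mono ?_
  rintro _ ⟨s, rfl⟩
  exact ⟨Fin.castLE hr s, rfl⟩

/-- In the quotient by the span of the unused vectors of `W`, the family `v` becomes `W ∘ σ`. -/
theorem LinearIndependent.of_sub_mem_span_image_compl {R M ι ι' : Type*} [Ring R]
    [AddCommGroup M] [Module R M] {W : ι' → M} (hW : LinearIndependent R W) {σ : ι → ι'}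
    (hσ : Function.Injective σ) {v : ι → M}
    (hv : ∀ i, v i - W (σ i) ∈ span R (W '' (Set.range σ)ᶜ)) : LinearIndependent R v := by
  set U := span R (W '' (Set.range σ)ᶜ)
  have hWσ : LinearIndependent R (U.mkQ ∘ W ∘ σ) := by
    refine (hW.comp σ hσ).map ?_
    rw [ker_mkQ, Set.range_comp]
    exact hW.disjoint_span_image disjoint_compl_right
  have hv' : U.mkQ ∘ v = U.mkQ ∘ W ∘ σ := funext fun i => (Submodule.Quotient.eq U).2 (hv i)
  exact LinearIndependent.of_comp U.mkQ (hv' ▸ hWσ)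

/-- The index, among `g, …, g^{[m]}` (`inl`) and `h, …, h^{[m]}` (`inr`), of the vector that each
member of the family of `coggia_couvreur_indep` equals up to a multiple of `h` or `h^{[m]}`. -/
def leadingIndex (m : ℕ) : Fin m ⊕ Fin m → Fin (m + 1) ⊕ Fin (m + 1)
  | .inl i => .inl i.castSucc
  | .inr i => if (i : ℕ) = 0 then .inl (Fin.last m) else .inr i.castSucc

lemma leadingIndex_injective (m : ℕ) : Function.Injective (leadingIndex m) := by
  rintro (i | i) (j | j) hij <;> by_cases hi : (i : ℕ) = 0 <;> by_cases hj : (j : ℕ) = 0 <;>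
    simp_all [leadingIndex, Fin.ext_iff] <;> omega

lemma inr_zero_notMem_range_leadingIndex (m : ℕ) : Sum.inr 0 ∉ Set.range (leadingIndex m) := by
  rintro ⟨i | i, hi⟩ <;> by_cases hi0 : (i : ℕ) = 0 <;> simp_all [leadingIndex, Fin.ext_iff]

lemma inr_last_notMem_range_leadingIndex (m : ℕ) :
    Sum.inr (Fin.last m) ∉ Set.range (leadingIndex m) := by
  rintro ⟨i | i, hi⟩ <;> by_cases hi0 : (i : ℕ) = 0 <;> simp_all [leadingIndex, Fin.ext_iff]
  omega

theorem coggia_couvreur_indep {Fq K : Type*} [Field Fq] [Fintype Fq] [Field K]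
    [Algebra Fq K] {n k : ℕ}
    (g h : Fin n → K) (γ : K)
    (hg : n - k + 2 ≤ rankWeight Fq g) (hh : n - k + 2 ≤ rankWeight Fq h)
    (hdisj : gab K (Fintype.card Fq) (n - k + 2) g
        ⊓ gab K (Fintype.card Fq) (n - k + 2) h = ⊥) :
    LinearIndependent K (fun i : Fin (n - k) ⊕ Fin (n - k) =>
      match i with
      | Sum.inl i =>
          if (i : ℕ) = 0 then fun j => g j + γ * h j
          else fun j => g j ^ Fintype.card Fq ^ (i : ℕ)
      | Sum.inr i =>
          if (i : ℕ) = 0 then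
            fun j => g j ^ Fintype.card Fq ^ (n - k)
              + γ ^ Fintype.card Fq * h j ^ Fintype.card Fq ^ (n - k)
          else fun j => h j ^ Fintype.card Fq ^ (i : ℕ)) := by
  set W := Sum.elim (frobPowers (Fintype.card Fq) g (n - k + 1))
    (frobPowers (Fintype.card Fq) h (n - k + 1))
  have hW : LinearIndependent K W :=
    (linearIndependent_frobPowers_of_le_rankWeight g (by omega)).sum_type
      (linearIndependent_frobPowers_of_le_rankWeight h (by omega))
      ((disjoint_iff.2 hdisj).mono (gab_mono K _ g (by omega)) (gab_mono K _ h (by omega)))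
  refine hW.of_sub_mem_span_image_compl (leadingIndex_injective (n - k)) ?_
  have hmem : ∀ (c : K) (s), Sum.inr s ∉ Set.range (leadingIndex (n - k)) →
      c • W (Sum.inr s) ∈ span K (W '' (Set.range (leadingIndex (n - k)))ᶜ) :=
    fun c s hs => smul_mem _ c (subset_span ⟨Sum.inr s, hs, rfl⟩)
  rintro (i | i) <;> by_cases hi : (i : ℕ) = 0 <;>
    simp only [leadingIndex, hi, if_true, if_false]
  · convert hmem γ 0 (inr_zero_notMem_range_leadingIndex _) using 1
    funext j
    simp [W, frobPowers, hi]
  · convert Submodule.zero_mem _ using 1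
    exact sub_eq_zero_of_eq rfl
  · convert hmem (γ ^ Fintype.card Fq) (Fin.last _) (inr_last_notMem_range_leadingIndex _) using 1
    funext j
    simp [W, frobPowers]
  · convert Submodule.zero_mem _ using 1
    exact sub_eq_zero_of_eq rfl
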